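/- Let P₀ ∈ ℂ, θ ∈ ℝ, and r₁, r₂ > 0; set R = r₁ + 𝕚r₂ and let P₁ = P₀ + r₁e^{𝕚θ}, P₂ = P₀ + Re^{𝕚θ}, P₃ = P₀ + 𝕚r₂e^{𝕚θ} be the anticlockwise vertices of a rectangle in ℂ. Let φ₀, φ₁, φ₂, φ₃ ∈ ℍ_ℂ be nonzero and pairwise ℂ-linearly independent. Then there exist A₀, A₁ ∈ ℍ_ℂ such that the degree-one polynomial A(z) = A₀ + z·A₁ satisfies A(P_ℓ)·L·A(P_ℓ)^c = φ_ℓ for ℓ = 0, 1, 2, 3, if and only if the following three conditions hold: (1) φ_ℓ + φ_ℓ^c = 0 and φ_ℓ·φ_ℓ^c = 0 for ℓ = 0, 1, 2, 3; (2) |R|²·φ₀ + R²·φ₁ − |R|²·φ₂ − R²·φ₃ = 0, where |R|² = r₁² + r₂²; (3) there exist pairs (s_ℓ, t_ℓ) ∈ ℂ² \ {(0,0)} and scalars ν_ℓ ∈ ℂ \ {0} with φ_ℓ = ν_ℓ·((s_ℓ² + t_ℓ²)·i + 𝕚(s_ℓ² − t_ℓ²)·j + 2𝕚 s_ℓ t_ℓ·k)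 for ℓ = 0, 1, 2, 3, such that the cross-ratio equality (s₀t₂ − s₂t₀)(s₁t₃ − s₃t₁)(P₁ − P₂)(P₀ − P₃) = (s₁t₂ − s₂t₁)(s₀t₃ − s₃t₀)(P₀ − P₂)(P₁ − P₃) holds. -/

import Mathlib

open Quaternion

/-- The complex quaternion `a + b i + c j + d k`. -/
noncomputable def mkQ (a b c d : ℂ) : Quaternion ℂ := ⟨a, b, c, d⟩

/-- The null quaternion `L = i + 𝕚 j ∈ ℍ_ℂ`. -/
noncomputable def Lq : Quaternion ℂ := mkQ 0 1 Complex.I 0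

/-!
In the spinor coordinates `p = A.re - 𝕚 A.imK`, `q = A.imI + 𝕚 A.imJ` one has
`A L A^c = conicPoint p q`, so for `A(z) = A₀ + z A₁` the map `z ↦ A(z) L A(z)^c` is the conic
parametrization composed with the Möbius map `z ↦ [p(z) : q(z)]`, `p, q` affine. Hence its values
are isotropic, satisfy every linear relation annihilating the quadratic polynomials at the nodes
(at the vertices of a rectangle: weights `|R|², R², -|R|², -R²`), and their conic parameters have
the cross-ratio of the nodes.

Conversely, after absorbing `ν_ℓ` into `(s_ℓ, t_ℓ)`, the cross-ratio condition gives affine `p, q`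
with `(p, q)(P_ℓ) = λ_ℓ (s_ℓ, t_ℓ)`. The corresponding `A` takes the values `λ_ℓ² φ_ℓ`, which
satisfy the same linear relation as the `φ_ℓ`. Three pairwise distinct conic points are linearly
independent, so all `λ_ℓ²` agree, and rescaling `A` by `1 / λ₃` interpolates exactly.
-/

open Complex (I)
open Function

@[simp] lemma mkQ_re (a b c d : ℂ) : (mkQ a b c d).re = a := rfl
@[simp] lemma mkQ_imI (a b c d : ℂ) : (mkQ a b c d).imI = b := rfl
@[simp] lemma mkQ_imJ (a b c d : ℂ) : (mkQ a b c d).imJ = c := rfl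
@[simp] lemma mkQ_imK (a b c d : ℂ) : (mkQ a b c d).imK = d := rfl

noncomputable def conicPoint (s t : ℂ) : ℍ[ℂ] :=
  mkQ 0 (s ^ 2 + t ^ 2) (I * (s ^ 2 - t ^ 2)) (2 * I * s * t)

theorem conicPoint_zero_zero : conicPoint 0 0 = 0 := by
  ext <;> simp [conicPoint]

theorem conicPoint_mul_mul (μ s t : ℂ) :
    conicPoint (μ * s) (μ * t) = μ ^ 2 • conicPoint s t := by
  ext <;> simp [conicPoint] <;> ring

theorem conicPoint_add_star (s t : ℂ) : conicPoint s t + star (conicPoint s t) = 0 := by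
  ext <;> simp [conicPoint]

theorem conicPoint_mul_star (s t : ℂ) : conicPoint s t * star (conicPoint s t) = 0 := by
  ext <;> simp [conicPoint, Quaternion.re_mul, Quaternion.imI_mul, Quaternion.imJ_mul,
    Quaternion.imK_mul] <;> grind [Complex.I_sq]

theorem mul_Lq_mul_star (A : ℍ[ℂ]) :
    A * Lq * star A = conicPoint (A.re - I * A.imK) (A.imI + I * A.imJ) := by
  ext <;> simp [conicPoint, Lq, Quaternion.re_mul, Quaternion.imI_mul, Quaternion.imJ_mul,
    Quaternion.imK_mul] <;> grind [Complex.I_sq]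

theorem mul_Lq_mul_star_affine (A₀ A₁ : ℍ[ℂ]) (z : ℂ) :
    (A₀ + z • A₁) * Lq * star (A₀ + z • A₁) =
      conicPoint (A₀.re - I * A₀.imK + z * (A₁.re - I * A₁.imK))
        (A₀.imI + I * A₀.imJ + z * (A₁.imI + I * A₁.imJ)) := by
  rw [mul_Lq_mul_star]
  congr 1 <;> simp <;> ring

theorem conicPoint_eq_smul_mkQ_add_smul_mkQ_add_smul_mkQ (s t : ℂ) :
    conicPoint s t =
      s ^ 2 • mkQ 0 1 I 0 + t ^ 2 • mkQ 0 1 (-I) 0 + (s * t) • mkQ 0 0 0 (2 * I) := by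
  ext <;> simp [conicPoint] <;> ring

theorem smul_mkQ_add_smul_mkQ_add_smul_mkQ_eq_zero_iff (a b c : ℂ) :
    a • mkQ 0 1 I 0 + b • mkQ 0 1 (-I) 0 + c • mkQ 0 0 0 (2 * I) = 0 ↔ a = 0 ∧ b = 0 ∧ c = 0 := by
  refine ⟨fun h => ?_, by rintro ⟨rfl, rfl, rfl⟩; ext <;> simp⟩
  have h₁ : a + b = 0 := by simpa using congrArg QuaternionAlgebra.imI h
  have hab : a - b = 0 := by
    simpa [← sub_eq_add_neg, ← sub_mul] using congrArg QuaternionAlgebra.imJ h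
  have h₃ : c = 0 := by simpa using congrArg QuaternionAlgebra.imK h
  exact ⟨by linear_combination (h₁ + hab) / 2, by linear_combination (h₁ - hab) / 2, h₃⟩

theorem sum_smul_conicPoint_eq_zero_iff {ι : Type*} [Fintype ι] (c s t : ι → ℂ) :
    ∑ i, c i • conicPoint (s i) (t i) = 0 ↔
      ∑ i, c i * s i ^ 2 = 0 ∧ ∑ i, c i * t i ^ 2 = 0 ∧ ∑ i, c i * (s i * t i) = 0 := by
  simp only [conicPoint_eq_smul_mkQ_add_smul_mkQ_add_smul_mkQ, smul_add, smul_smul,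
    Finset.sum_add_distrib, ← Finset.sum_smul, smul_mkQ_add_smul_mkQ_add_smul_mkQ_eq_zero_iff]

theorem exists_eq_mul_of_mul_sub_mul_eq_zero {K : Type*} [Field K] {a b s t : K}
    (h : a * t - s * b = 0) (hst : (s, t) ≠ (0, 0)) : ∃ l, a = l * s ∧ b = l * t := by
  rcases eq_or_ne s 0 with rfl | hs
  · have ht : t ≠ 0 := by rintro rfl; exact hst rfl
    exact ⟨b / t, by simpa [ht] using h, by field_simp⟩
  · exact ⟨a / s, by field_simp, by field_simp; linear_combination -h⟩

theorem eq_last_of_sum_smul_eq_zero {R M : Type*} [CommRing R] [NoZeroDivisors R]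
    [AddCommGroup M] [Module R M] {n : ℕ} {v : Fin (n + 1) → M}
    (hv : LinearIndependent R (v ∘ Fin.castSucc)) {c a : Fin (n + 1) → R} (hc : ∀ i, c i ≠ 0)
    (h₁ : ∑ i, c i • v i = 0) (h₂ : ∑ i, (c i * a i) • v i = 0) (i : Fin (n + 1)) :
    a i = a (Fin.last n) := by
  have h : ∑ i, (c i * (a i - a (Fin.last n))) • v i = 0 := by
    simp only [mul_sub, sub_smul, Finset.sum_sub_distrib, h₂, zero_sub, neg_eq_zero]
    simp only [mul_comm (c _), mul_smul, ← Finset.smul_sum, h₁, smul_zero]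
  rw [Fin.sum_univ_castSucc, sub_self, mul_zero, zero_smul, add_zero] at h
  induction i using Fin.lastCases with
  | last => rfl
  | cast i =>
    have hi := Fintype.linearIndependent_iff.1 hv _ h i
    exact sub_eq_zero.1 ((mul_eq_zero.1 hi).resolve_left (hc _))

def SameCrossRatio (s t x : Fin 4 → ℂ) : Prop :=
  (s 0 * t 2 - s 2 * t 0) * (s 1 * t 3 - s 3 * t 1) * (x 1 - x 2) * (x 0 - x 3) =
    (s 1 * t 2 - s 2 * t 1) * (s 0 * t 3 - s 3 * t 0) * (x 0 - x 2) * (x 1 - x 3)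

theorem sameCrossRatio_affine (x : Fin 4 → ℂ) (p₀ p₁ q₀ q₁ : ℂ) :
    SameCrossRatio (fun ℓ => p₀ + x ℓ * p₁) (fun ℓ => q₀ + x ℓ * q₁) x := by
  unfold SameCrossRatio; ring

theorem SameCrossRatio.mul {s t x : Fin 4 → ℂ} (h : SameCrossRatio s t x) (μ : Fin 4 → ℂ) :
    SameCrossRatio (fun ℓ => μ ℓ * s ℓ) (fun ℓ => μ ℓ * t ℓ) x := by
  unfold SameCrossRatio at *; linear_combination μ 0 * μ 1 * μ 2 * μ 3 * h

theorem exists_affine_eq_mul_of_sameCrossRatio {x s t : Fin 4 → ℂ} (hx : Injective x)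
    (hd : ∀ i j, i ≠ j → s i * t j - s j * t i ≠ 0) (hcr : SameCrossRatio s t x) :
    ∃ p₀ p₁ q₀ q₁ : ℂ, ∃ l : Fin 4 → ℂ, (∀ ℓ, l ℓ ≠ 0) ∧
      ∀ ℓ, p₀ + x ℓ * p₁ = l ℓ * s ℓ ∧ q₀ + x ℓ * q₁ = l ℓ * t ℓ := by
  set α := (x 2 - x 0) * (s 1 * t 2 - s 2 * t 1)
  set β := (x 1 - x 2) * (s 0 * t 2 - s 2 * t 0)
  -- `[p z : q z]` is `[s 0 : t 0]` at `x 0` and `[s 1 : t 1]` at `x 1`; `α, β` are chosen so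
  -- that it is `[s 2 : t 2]` at `x 2`, and then the cross-ratio condition makes it `[s 3 : t 3]`
  -- at `x 3`.
  set p : ℂ → ℂ := fun z => α * (z - x 1) * s 0 + β * (z - x 0) * s 1
  set q : ℂ → ℂ := fun z => α * (z - x 1) * t 0 + β * (z - x 0) * t 1
  have hα : α ≠ 0 := mul_ne_zero (sub_ne_zero.2 (hx.ne (by decide))) (hd 1 2 (by decide))
  have hβ : β ≠ 0 := mul_ne_zero (sub_ne_zero.2 (hx.ne (by decide))) (hd 0 2 (by decide))
  have hdet : ∀ ℓ, p (x ℓ) * t ℓ - s ℓ * q (x ℓ) = 0 := by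
    unfold SameCrossRatio at hcr
    intro ℓ
    fin_cases ℓ <;> simp only [p, q, α, β, Fin.zero_eta, Fin.mk_one, Fin.reduceFinMk, Fin.isValue]
    · ring
    · ring
    · ring
    · linear_combination -hcr
  have hpq : ∀ ℓ, (p (x ℓ), q (x ℓ)) ≠ (0, 0) := by
    intro ℓ h
    simp only [Prod.mk.injEq] at h
    have h₀ : x ℓ = x 0 := by
      have h₀ : β * (x ℓ - x 0) * (s 1 * t 0 - s 0 * t 1) = 0 := by
        linear_combination t 0 * h.1 - s 0 * h.2
      simpa [hβ, hd 1 0, sub_eq_zero] using h₀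
    have h₁ : x ℓ = x 1 := by
      have h₁ : α * (x ℓ - x 1) * (s 0 * t 1 - s 1 * t 0) = 0 := by
        linear_combination t 1 * h.1 - s 1 * h.2
      simpa [hα, hd 0 1, sub_eq_zero] using h₁
    exact hx.ne (by decide : (0 : Fin 4) ≠ 1) (h₀.symm.trans h₁)
  have hst : ∀ ℓ, (s ℓ, t ℓ) ≠ (0, 0) := by
    intro ℓ h
    obtain ⟨m, hm⟩ : ∃ m, m ≠ ℓ := ⟨ℓ + 1, by simp⟩
    simp only [Prod.mk.injEq] at h
    exact hd ℓ m hm.symm (by simp [h.1, h.2])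
  choose l hl using fun ℓ => exists_eq_mul_of_mul_sub_mul_eq_zero (hdet ℓ) (hst ℓ)
  refine ⟨-(α * x 1 * s 0 + β * x 0 * s 1), α * s 0 + β * s 1,
    -(α * x 1 * t 0 + β * x 0 * t 1), α * t 0 + β * t 1, l, fun ℓ hl0 => hpq ℓ ?_, fun ℓ => ?_⟩
  · simp [hl, hl0]
  · rw [← (hl ℓ).1, ← (hl ℓ).2]; constructor <;> ring

theorem linearIndependent_conicPoint (s t : Fin 3 → ℂ)
    (hd : ∀ i j, i ≠ j → s i * t j - s j * t i ≠ 0) :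
    LinearIndependent ℂ fun i => conicPoint (s i) (t i) := by
  refine Fintype.linearIndependent_iff.2 fun c hc => ?_
  obtain ⟨hss, htt, hst⟩ := (sum_smul_conicPoint_eq_zero_iff c s t).1 hc
  -- the quadratic form `(s t_j - s_j t) (s t_k - s_k t)` vanishes at `[s_j : t_j]`, `[s_k : t_k]`
  have key (j k : Fin 3) :
      ∑ i, c i * ((s i * t j - s j * t i) * (s i * t k - s k * t i)) = 0 := by
    have e (i : Fin 3) : c i * ((s i * t j - s j * t i) * (s i * t k - s k * t i)) =
        t j * t k * (c i * s i ^ 2) + s j * s k * (c i * t i ^ 2) -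
          (s j * t k + s k * t j) * (c i * (s i * t i)) := by ring
    simp only [e, Finset.sum_sub_distrib, Finset.sum_add_distrib, ← Finset.mul_sum, hss, htt, hst]
    ring
  intro i
  fin_cases i
  · simpa [Fin.sum_univ_three, hd 0 1, hd 0 2] using key 1 2
  · simpa [Fin.sum_univ_three, hd 1 0, hd 1 2] using key 0 2
  · simpa [Fin.sum_univ_three, hd 2 0, hd 2 1] using key 0 1

theorem mul_sub_mul_ne_zero_of_conicPoint {s t s' t' : ℂ} (h₀ : conicPoint s' t' ≠ 0)
    (h : ∀ c : ℂ, conicPoint s t ≠ c • conicPoint s' t') : s * t' - s' * t ≠ 0 := by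
  intro hdet
  have hst' : (s', t') ≠ (0, 0) := by
    intro h'
    simp only [Prod.mk.injEq] at h'
    exact h₀ (by rw [h'.1, h'.2, conicPoint_zero_zero])
  obtain ⟨l, rfl, rfl⟩ := exists_eq_mul_of_mul_sub_mul_eq_zero hdet hst'
  exact h (l ^ 2) (conicPoint_mul_mul l s' t')

def AnnihilatesQuadratics {ι : Type*} [Fintype ι] (w x : ι → ℂ) : Prop :=
  ∀ k ≤ 2, ∑ i, w i * x i ^ k = 0

namespace AnnihilatesQuadratics

variable {ι : Type*} [Fintype ι] {w x : ι → ℂ}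

theorem sum_mul_mul_eq_zero (hw : AnnihilatesQuadratics w x) (a b c d : ℂ) :
    ∑ i, w i * ((a + x i * b) * (c + x i * d)) = 0 := by
  have e (i : ι) : w i * ((a + x i * b) * (c + x i * d)) =
      a * c * (w i * x i ^ 0) + (a * d + b * c) * (w i * x i ^ 1) + b * d * (w i * x i ^ 2) := by
    ring
  simp only [e, Finset.sum_add_distrib, ← Finset.mul_sum, hw 0 (by norm_num), hw 1 (by norm_num),
    hw 2 le_rfl, mul_zero, add_zero]

theorem sum_smul_conicPoint_eq_zero (hw : AnnihilatesQuadratics w x) (p₀ p₁ q₀ q₁ : ℂ) :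
    ∑ i, w i • conicPoint (p₀ + x i * p₁) (q₀ + x i * q₁) = 0 :=
  (sum_smul_conicPoint_eq_zero_iff _ _ _).2
    ⟨by simpa only [sq] using hw.sum_mul_mul_eq_zero p₀ p₁ p₀ p₁,
      by simpa only [sq] using hw.sum_mul_mul_eq_zero q₀ q₁ q₀ q₁,
      hw.sum_mul_mul_eq_zero p₀ p₁ q₀ q₁⟩

end AnnihilatesQuadratics

theorem exists_affine_interpolation_of_conicPoint {w x s t : Fin 4 → ℂ}
    (hw : AnnihilatesQuadratics w x) (hw₀ : ∀ ℓ, w ℓ ≠ 0) (hx : Injective x)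
    (hd : ∀ i j, i ≠ j → s i * t j - s j * t i ≠ 0)
    (hlin : ∑ ℓ, w ℓ • conicPoint (s ℓ) (t ℓ) = 0) (hcr : SameCrossRatio s t x) :
    ∃ A₀ A₁ : ℍ[ℂ], ∀ ℓ,
      (A₀ + x ℓ • A₁) * Lq * star (A₀ + x ℓ • A₁) = conicPoint (s ℓ) (t ℓ) := by
  obtain ⟨p₀, p₁, q₀, q₁, l, hl₀, hl⟩ := exists_affine_eq_mul_of_sameCrossRatio hx hd hcr
  have hconic (ℓ : Fin 4) : conicPoint (p₀ + x ℓ * p₁) (q₀ + x ℓ * q₁) =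
      l ℓ ^ 2 • conicPoint (s ℓ) (t ℓ) := by
    rw [(hl ℓ).1, (hl ℓ).2, conicPoint_mul_mul]
  have hli : LinearIndependent ℂ ((fun ℓ => conicPoint (s ℓ) (t ℓ)) ∘ Fin.castSucc) :=
    linearIndependent_conicPoint _ _ fun i j hij => hd _ _ (Fin.castSucc_injective _ |>.ne hij)
  have hlin' : ∑ ℓ, (w ℓ * l ℓ ^ 2) • conicPoint (s ℓ) (t ℓ) = 0 := by
    simpa only [mul_smul, ← hconic] using hw.sum_smul_conicPoint_eq_zero p₀ p₁ q₀ q₁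
  have hsq : ∀ ℓ, l ℓ ^ 2 = l (Fin.last 3) ^ 2 :=
    eq_last_of_sum_smul_eq_zero hli hw₀ hlin hlin'
  set c := (l (Fin.last 3))⁻¹
  refine ⟨mkQ (c * p₀) (c * q₀) 0 0, mkQ (c * p₁) (c * q₁) 0 0, fun ℓ => ?_⟩
  have hφ : conicPoint (s ℓ) (t ℓ) = c ^ 2 • conicPoint (p₀ + x ℓ * p₁) (q₀ + x ℓ * q₁) := by
    rw [hconic, smul_smul, hsq, ← mul_pow, inv_mul_cancel₀ (hl₀ _), one_pow, one_smul]
  rw [hφ, ← conicPoint_mul_mul, mul_Lq_mul_star_affine]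
  congr 1 <;> simp <;> ring

theorem exists_affine_interpolation_of_smul_conicPoint {w x s t ν : Fin 4 → ℂ}
    {φ : Fin 4 → ℍ[ℂ]} (hw : AnnihilatesQuadratics w x) (hw₀ : ∀ ℓ, w ℓ ≠ 0) (hx : Injective x)
    (hφ₀ : ∀ ℓ, φ ℓ ≠ 0) (hφind : ∀ ℓ m, ℓ ≠ m → ∀ c : ℂ, φ ℓ ≠ c • φ m)
    (hφ : ∀ ℓ, φ ℓ = ν ℓ • conicPoint (s ℓ) (t ℓ)) (hlin : ∑ ℓ, w ℓ • φ ℓ = 0)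
    (hcr : SameCrossRatio s t x) :
    ∃ A₀ A₁ : ℍ[ℂ], ∀ ℓ, (A₀ + x ℓ • A₁) * Lq * star (A₀ + x ℓ • A₁) = φ ℓ := by
  choose μ hμ using fun ℓ => IsAlgClosed.exists_pow_nat_eq (ν ℓ) two_pos
  have hφ' (ℓ : Fin 4) : φ ℓ = conicPoint (μ ℓ * s ℓ) (μ ℓ * t ℓ) := by
    rw [conicPoint_mul_mul, hμ, hφ]
  simp only [hφ'] at hφ₀ hφind hlin ⊢
  exact exists_affine_interpolation_of_conicPoint hw hw₀ hx
    (fun i j hij => mul_sub_mul_ne_zero_of_conicPoint (hφ₀ j) (hφind i j hij)) hlin (hcr.mul μ)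

noncomputable def rectangleWeights (r₁ r₂ : ℝ) : Fin 4 → ℂ :=
  ![(r₁ : ℂ) ^ 2 + (r₂ : ℂ) ^ 2, ((r₁ : ℂ) + I * r₂) ^ 2,
    -((r₁ : ℂ) ^ 2 + (r₂ : ℂ) ^ 2), -((r₁ : ℂ) + I * r₂) ^ 2]

section rectangle

variable {r₁ r₂ : ℝ} {E : ℂ} {P : Fin 4 → ℂ}

theorem annihilatesQuadratics_rectangleWeights (hP₁ : P 1 = P 0 + r₁ * E)
    (hP₂ : P 2 = P 0 + (r₁ + I * r₂) * E) (hP₃ : P 3 = P 0 + I * r₂ * E) :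
    AnnihilatesQuadratics (rectangleWeights r₁ r₂) P := by
  intro k hk
  interval_cases k <;>
    simp [Fin.sum_univ_four, rectangleWeights, hP₁, hP₂, hP₃] <;> grind [Complex.I_sq]

theorem rectangleWeights_ne_zero (hr₁ : r₁ ≠ 0) (ℓ : Fin 4) : rectangleWeights r₁ r₂ ℓ ≠ 0 := by
  have h₁ : (r₁ : ℂ) ^ 2 + (r₂ : ℂ) ^ 2 ≠ 0 := by
    exact_mod_cast (by positivity : r₁ ^ 2 + r₂ ^ 2 ≠ 0)
  have h₂ : (r₁ : ℂ) + I * r₂ ≠ 0 := fun h => hr₁ (by simpa using congrArg Complex.re h)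
  fin_cases ℓ <;> simp [rectangleWeights, -neg_add_rev, h₁, h₂]

theorem rectangle_injective (hr₁ : r₁ ≠ 0) (hr₂ : r₂ ≠ 0) (hE : E ≠ 0)
    (hP₁ : P 1 = P 0 + r₁ * E) (hP₂ : P 2 = P 0 + (r₁ + I * r₂) * E)
    (hP₃ : P 3 = P 0 + I * r₂ * E) : Injective P := by
  have hu (ℓ : Fin 4) : P ℓ = P 0 + ![0, (r₁ : ℂ), r₁ + I * r₂, I * r₂] ℓ * E := by
    fin_cases ℓ <;> simp [hP₁, hP₂, hP₃]
  intro i j hij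
  rw [hu i, hu j, add_right_inj, mul_left_inj' hE] at hij
  fin_cases i <;> fin_cases j <;> simp [Complex.ext_iff] at hij ⊢ <;> grind

end rectangle

/-- Interpolation of four prescribed nonzero, pairwise linearly
independent values `φ₀, φ₁, φ₂, φ₃ ∈ ℍ_ℂ` at the vertices of a rectangle by
`Φ(z) = A(z) L A(z)^c` with `A` of degree one is possible iff the `φ_ℓ` are isotropic
vectors, satisfy the linear relation `|R|²φ₀ + R²φ₁ − |R|²φ₂ − R²φ₃ = 0`, and the
cross-ratios of the vertices and of the conic parameters of the `φ_ℓ` agree. -/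
theorem enneper_patch_interpolation (θ r₁ r₂ : ℝ) (hr₁ : 0 < r₁) (hr₂ : 0 < r₂)
    (R : ℂ) (hR : R = (r₁ : ℂ) + Complex.I * (r₂ : ℂ))
    (P : Fin 4 → ℂ)
    (hP₁ : P 1 = P 0 + (r₁ : ℂ) * Complex.exp (Complex.I * (θ : ℂ)))
    (hP₂ : P 2 = P 0 + R * Complex.exp (Complex.I * (θ : ℂ)))
    (hP₃ : P 3 = P 0 + Complex.I * (r₂ : ℂ) * Complex.exp (Complex.I * (θ : ℂ)))
    (φ : Fin 4 → Quaternion ℂ)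
    (hφne : ∀ ℓ, φ ℓ ≠ 0)
    (hφind : ∀ ℓ m, ℓ ≠ m → ∀ c : ℂ, φ ℓ ≠ c • φ m) :
    (∃ A₀ A₁ : Quaternion ℂ, ∀ ℓ : Fin 4,
        (A₀ + P ℓ • A₁) * Lq * star (A₀ + P ℓ • A₁) = φ ℓ) ↔
      ((∀ ℓ, φ ℓ + star (φ ℓ) = 0 ∧ φ ℓ * star (φ ℓ) = 0) ∧
        ((r₁ : ℂ) ^ 2 + (r₂ : ℂ) ^ 2) • φ 0 + R ^ 2 • φ 1 -
          ((r₁ : ℂ) ^ 2 + (r₂ : ℂ) ^ 2) • φ 2 - R ^ 2 • φ 3 = 0 ∧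
        ∃ s t ν : Fin 4 → ℂ,
          (∀ ℓ, (s ℓ, t ℓ) ≠ (0, 0)) ∧ (∀ ℓ, ν ℓ ≠ 0) ∧
          (∀ ℓ, φ ℓ = ν ℓ • mkQ 0 (s ℓ ^ 2 + t ℓ ^ 2)
            (Complex.I * (s ℓ ^ 2 - t ℓ ^ 2)) (2 * Complex.I * s ℓ * t ℓ)) ∧
          (s 0 * t 2 - s 2 * t 0) * (s 1 * t 3 - s 3 * t 1) * (P 1 - P 2) * (P 0 - P 3) =
            (s 1 * t 2 - s 2 * t 1) * (s 0 * t 3 - s 3 * t 0) * (P 0 - P 2) * (P 1 - P 3)) := by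
  subst hR
  have hw := annihilatesQuadratics_rectangleWeights hP₁ hP₂ hP₃
  have hlin : ((r₁ : ℂ) ^ 2 + (r₂ : ℂ) ^ 2) • φ 0 + ((r₁ : ℂ) + I * r₂) ^ 2 • φ 1 -
      ((r₁ : ℂ) ^ 2 + (r₂ : ℂ) ^ 2) • φ 2 - ((r₁ : ℂ) + I * r₂) ^ 2 • φ 3 =
      ∑ ℓ, rectangleWeights r₁ r₂ ℓ • φ ℓ := by
    simp only [Fin.sum_univ_four, rectangleWeights, Matrix.cons_val_zero, Matrix.cons_val_one,
      Matrix.cons_val]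
    module
  rw [hlin]
  constructor
  · rintro ⟨A₀, A₁, hA⟩
    obtain ⟨p₀, p₁, q₀, q₁, hφ⟩ : ∃ p₀ p₁ q₀ q₁ : ℂ,
        ∀ ℓ, φ ℓ = conicPoint (p₀ + P ℓ * p₁) (q₀ + P ℓ * q₁) :=
      ⟨_, _, _, _, fun ℓ => (hA ℓ).symm.trans (mul_Lq_mul_star_affine A₀ A₁ (P ℓ))⟩
    refine ⟨fun ℓ => hφ ℓ ▸ ⟨conicPoint_add_star _ _, conicPoint_mul_star _ _⟩,
      by simpa only [hφ] using hw.sum_smul_conicPoint_eq_zero p₀ p₁ q₀ q₁, _, _, fun _ => 1,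
      fun ℓ h => hφne ℓ ?_, fun _ => one_ne_zero, fun ℓ => (hφ ℓ).trans (one_smul ℂ _).symm,
      sameCrossRatio_affine P p₀ p₁ q₀ q₁⟩
    simp only [Prod.mk.injEq] at h
    rw [hφ ℓ, h.1, h.2, conicPoint_zero_zero]
  · rintro ⟨-, hlin, s, t, ν, -, -, hφ, hcr⟩
    have hP := rectangle_injective hr₁.ne' hr₂.ne' (Complex.exp_ne_zero _) hP₁ hP₂ hP₃
    exact exists_affine_interpolation_of_smul_conicPoint hw (rectangleWeights_ne_zero hr₁.ne') hP
      hφne hφind hφ hlin hcr
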